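/- arXiv:1907.11192 — 2 statements merged into one kernel-verified Lean document; each statement's English description precedes it below -/
import Mathlib

section
/- For each dyadic $N$ and frequency-localized $f$ with $\hat{f}$ supported in $\{|n| \sim N\}$ on $\mathbb{T}^d$, assuming the Strichartz estimate $\|e^{it\Delta} f\|_{L^p_{x,t}(\mathbb{T}^{d+1})} \lesssim N^{\frac{d}{2}-\frac{d+2}{p}+\varepsilon}\|f\|_{L^2}$ with $p = 2\frac{d+2}{d}$, one has the frequency-localized maximal estimate $\| \sup_{0\leq t \leq 1} |e^{it\Delta} f| \|_{L^{2\frac{d+2}{d}}(\mathbb{T}^d)} \lesssim N^{\frac{d}{d+2}+\varepsilon} \|f\|_{L^2(\mathbb{T}^d)}$. -/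
open MeasureTheory Complex

noncomputable section

/-- Japanese bracket `⟨n⟩` of a lattice point. -/
def jap {d : ℕ} (n : Fin d → ℤ) : ℝ := Real.sqrt (1 + ∑ i, ((n i : ℝ))^2)

/-- Euclidean norm of a lattice point. -/
def inorm {d : ℕ} (n : Fin d → ℤ) : ℝ := Real.sqrt (∑ i, ((n i : ℝ))^2)

/-- Solution of the free Schrödinger equation on `𝕋^d` with Fourier coefficients `c`. -/
def freeSol {d : ℕ} (c : (Fin d → ℤ) → ℂ) (x : Fin d → ℝ) (t : ℝ) : ℂ :=
  ∑' n : Fin d → ℤ, c n * Complex.exp (Complex.I *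
    (((∑ i, (n i : ℝ) * x i) - (∑ i, ((n i : ℝ))^2) * t : ℝ) : ℂ))

/-- Sobolev `H^s(𝕋^d)` norm in terms of Fourier coefficients. -/
def HsNorm {d : ℕ} (s : ℝ) (c : (Fin d → ℤ) → ℂ) : ℝ :=
  Real.sqrt (∑' n : Fin d → ℤ, (jap n) ^ (2*s) * ‖c n‖^2)

/-- Fundamental domain of the torus `𝕋^d`. -/
def torusBox (d : ℕ) : Set (Fin d → ℝ) := Set.univ.pi fun _ => Set.Icc 0 (2*Real.pi)

/-- `L^2` norm on the torus. -/
def torusL2 {d : ℕ} (g : (Fin d → ℝ) → ℝ) : ℝ :=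
  Real.sqrt (∫ x in torusBox d, (g x)^2)

/-- `L^p` norm on the torus. -/
def torusLp {d : ℕ} (p : ℝ) (g : (Fin d → ℝ) → ℝ) : ℝ :=
  (∫ x in torusBox d, |g x| ^ p) ^ (1/p)

/-- Space-time `L^p` norm on `𝕋^{d+1}`. -/
def stLp {d : ℕ} (p : ℝ) (F : (Fin d → ℝ) → ℝ → ℂ) : ℝ :=
  (∫ x in torusBox d, ∫ t in Set.Icc (0:ℝ) (2*Real.pi), ‖F x t‖ ^ p) ^ (1/p)

/-- Fourier projection onto the annulus `N/2 < |n| ≤ N`. -/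
def projAnn {d : ℕ} (N : ℝ) (c : (Fin d → ℤ) → ℂ) : (Fin d → ℤ) → ℂ :=
  fun n => if N/2 < inorm n ∧ inorm n ≤ N then c n else 0

/-- Space-time Fourier transform on `𝕋^d × ℝ`. -/
def stFourierT {d : ℕ} (F : (Fin d → ℝ) → ℝ → ℂ) (n : Fin d → ℤ) (τ : ℝ) : ℂ :=
  ∫ x in torusBox d, ∫ t : ℝ,
    F x t * Complex.exp (-Complex.I * (((∑ i, (n i : ℝ) * x i) + τ * t : ℝ) : ℂ))

/-- Bourgain `X^{s,b}` norm on `𝕋^d × ℝ`. -/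
def XNormT {d : ℕ} (s b : ℝ) (F : (Fin d → ℝ) → ℝ → ℂ) : ℝ :=
  Real.sqrt (∫ τ : ℝ, ∑' n : Fin d → ℤ,
    (1 + (τ + ∑ i, ((n i : ℝ))^2)^2) ^ b * (jap n) ^ (2*s) * ‖stFourierT F n τ‖^2)

/-!
For fixed `x`, `g(t) = e^{itΔ}f(x)` is a trigonometric polynomial in `t` whose frequencies
`|n|²` lie in `[0, M]`, `M = N²`. On such polynomials `d/dt` is convolution with
`-i e^{-iMu} |∑_{j<M} e^{iju}|² / 2π`, a kernel of `L¹`-norm `M`; combined with Young's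
inequality `a^{p-1} b ≤ (1 - 1/p) a^p + b^p / p` this gives `∫ |g|^{p-1} |g'| ≤ M ∫ |g|^p`.
The fundamental theorem of calculus for `|g|^p` then yields
`sup_{[0,1]} |g|^p ≤ (1/2π + p M) ∫_0^{2π} |g|^p`. Integrating in `x` and inserting the
Strichartz estimate gives the claim, since `M^{1/p} = N^{d/(d+2)}` for `p = 2(d+2)/d`.
-/

open Real Set Function intervalIntegral

lemma rpow_sub_one_mul_le {x y p : ℝ} (hx : 0 ≤ x) (hy : 0 ≤ y) (hp : 1 ≤ p) :
    x ^ (p - 1) * y ≤ (1 - 1 / p) * x ^ p + 1 / p * y ^ p := by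
  have hp0 : 0 < p := by linarith
  have h := geom_mean_le_arith_mean2_weighted (w₁ := 1 - 1 / p) (w₂ := 1 / p)
    (sub_nonneg.2 ((div_le_one hp0).2 hp)) (by positivity) (rpow_nonneg hx p)
    (rpow_nonneg hy p) (by ring)
  rwa [← rpow_mul hx, ← rpow_mul hy, mul_one_div_cancel hp0.ne', rpow_one,
    mul_sub, mul_one, mul_one_div_cancel hp0.ne'] at h

lemma integral_integral_mul_comp_sub_of_periodic {f w : ℝ → ℝ} {T : ℝ}
    (hf : Continuous f) (hper : Periodic f T) (hw : Continuous w) :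
    ∫ t in 0..T, ∫ u in 0..T, w u * f (t - u) = (∫ u in 0..T, w u) * ∫ t in 0..T, f t := by
  have hcont : Continuous (uncurry fun t u => w u * f (t - u)) := by fun_prop
  rw [MeasureTheory.intervalIntegral_intervalIntegral_swap
    ((hcont.continuousOn.integrableOn_compact (isCompact_Icc.prod isCompact_Icc)).mono_set
      (prod_mono uIoc_subset_uIcc uIoc_subset_uIcc)), ← intervalIntegral.integral_mul_const]
  refine integral_congr fun u _ => ?_
  rw [intervalIntegral.integral_const_mul, integral_comp_sub_right, zero_sub, sub_eq_neg_add,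
    hper.intervalIntegral_add_eq (-u) 0, zero_add]

lemma abs_sub_le_integral_of_abs_deriv_le {F F' G : ℝ → ℝ} {a b : ℝ} (hab : a ≤ b)
    (hF : ∀ t, HasDerivAt F (F' t) t) (hG : Continuous G) (hF'G : ∀ t, |F' t| ≤ G t) :
    |F b - F a| ≤ ∫ t in a..b, G t := by
  have hFc : Continuous F := continuous_iff_continuousAt.2 fun t => (hF t).continuousAt
  refine abs_sub_le_iff.2 ⟨?_, ?_⟩
  · exact sub_le_integral_of_hasDeriv_right_of_le hab hFc.continuousOn
      (fun t _ => (hF t).hasDerivWithinAt) hG.integrableOn_Icc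
      (fun t _ => (le_abs_self _).trans (hF'G t))
  · have := sub_le_integral_of_hasDeriv_right_of_le hab hFc.neg.continuousOn
      (fun t _ => (hF t).neg.hasDerivWithinAt) hG.integrableOn_Icc
      (fun t _ => (neg_le_abs _).trans (hF'G t))
    simp only [Pi.neg_apply] at this
    linarith

lemma le_average_add_integral_of_abs_deriv_le {F F' G : ℝ → ℝ} {T t₀ : ℝ} (hT : 0 < T)
    (ht₀ : t₀ ∈ Icc 0 T) (hF : ∀ t, HasDerivAt F (F' t) t) (hG : Continuous G)
    (hF'G : ∀ t, |F' t| ≤ G t) :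
    F t₀ ≤ (∫ t in 0..T, F t) / T + ∫ t in 0..T, G t := by
  have hFc : Continuous F := continuous_iff_continuousAt.2 fun t => (hF t).continuousAt
  have hG0 : ∀ t, 0 ≤ G t := fun t => (abs_nonneg _).trans (hF'G t)
  have key : ∀ u ∈ Icc 0 T, F t₀ - F u ≤ ∫ t in 0..T, G t := by
    intro u hu
    have hsub : ∀ {a b}, a ∈ Icc 0 T → b ∈ Icc 0 T → a ≤ b →
        |F b - F a| ≤ ∫ t in 0..T, G t := fun ha hb hab =>
      (abs_sub_le_integral_of_abs_deriv_le hab hF hG hF'G).trans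
        (integral_mono_interval ha.1 hab hb.2 (.of_forall hG0) (hG.intervalIntegrable _ _))
    rcases le_total u t₀ with h | h
    · exact (le_abs_self _).trans (hsub hu ht₀ h)
    · exact (le_abs_self _).trans ((abs_sub_comm _ _).trans_le (hsub ht₀ hu h))
  have hFi : IntervalIntegrable F MeasureTheory.volume 0 T := hFc.intervalIntegrable 0 T
  have hint :=
    integral_mono_on hT.le (intervalIntegrable_const.sub hFi) intervalIntegrable_const key
  rw [intervalIntegral.integral_sub intervalIntegrable_const hFi, intervalIntegral.integral_const,
    intervalIntegral.integral_const, smul_eq_mul, smul_eq_mul, sub_zero] at hint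
  rw [div_add' _ _ _ hT.ne', le_div_iff₀ hT]
  linarith

lemma norm_rpow_le_average_add_integral {E : Type*} [NormedAddCommGroup E]
    [InnerProductSpace ℝ E] {g : ℝ → E} {T t₀ p : ℝ} (hT : 0 < T) (ht₀ : t₀ ∈ Icc 0 T)
    (hp : 1 < p) (hg : Differentiable ℝ g) (hg' : Continuous (deriv g)) :
    ‖g t₀‖ ^ p ≤
      (∫ t in 0..T, ‖g t‖ ^ p) / T + p * ∫ t in 0..T, ‖g t‖ ^ (p - 1) * ‖deriv g t‖ := by
  rw [← intervalIntegral.integral_const_mul]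
  refine le_average_add_integral_of_abs_deriv_le hT ht₀
    (fun t => ((hg.norm_rpow hp) t).hasDerivAt) ?_ fun t => ?_
  · exact continuous_const.mul
      ((hg.continuous.norm.rpow_const fun _ => Or.inr (by linarith)).mul hg'.norm)
  · rw [← Real.norm_eq_abs, norm_deriv_eq_norm_fderiv, ← mul_assoc]
    simpa only [norm_deriv_eq_norm_fderiv] using norm_fderiv_norm_rpow_le hg hp (x := t)

lemma integral_rpow_sub_one_mul_le_of_le_conv {f h w : ℝ → ℝ} {T p : ℝ} (hT : 0 ≤ T)
    (hp : 1 ≤ p) (hf : Continuous f) (hf0 : ∀ t, 0 ≤ f t) (hper : Periodic f T)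
    (hh : Continuous h) (hw : Continuous w) (hw0 : ∀ u, 0 ≤ w u)
    (hhw : ∀ t, h t ≤ ∫ u in 0..T, w u * f (t - u)) :
    ∫ t in 0..T, f t ^ (p - 1) * h t ≤ (∫ u in 0..T, w u) * ∫ t in 0..T, f t ^ p := by
  set W := ∫ u in 0..T, w u
  have hp0 : 0 ≤ p - 1 := by linarith
  have hconv : Continuous fun t => ∫ u in 0..T, w u * f (t - u) ^ p :=
    continuous_parametric_intervalIntegral_of_continuous' (by fun_prop (disch := linarith)) 0 T
  have hpt : ∀ t, f t ^ (p - 1) * h t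
      ≤ (1 - 1 / p) * W * f t ^ p + 1 / p * ∫ u in 0..T, w u * f (t - u) ^ p := by
    intro t
    calc f t ^ (p - 1) * h t ≤ f t ^ (p - 1) * ∫ u in 0..T, w u * f (t - u) :=
          mul_le_mul_of_nonneg_left (hhw t) (rpow_nonneg (hf0 t) _)
      _ = ∫ u in 0..T, w u * (f t ^ (p - 1) * f (t - u)) := by
          rw [← intervalIntegral.integral_const_mul]
          exact integral_congr fun u _ => by ring
      _ ≤ ∫ u in 0..T, w u * ((1 - 1 / p) * f t ^ p + 1 / p * f (t - u) ^ p) :=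
          integral_mono_on hT (Continuous.intervalIntegrable (by fun_prop) _ _)
            (Continuous.intervalIntegrable (by fun_prop (disch := linarith)) _ _) fun u _ =>
            mul_le_mul_of_nonneg_left (rpow_sub_one_mul_le (hf0 t) (hf0 _) hp) (hw0 u)
      _ = (1 - 1 / p) * W * f t ^ p + 1 / p * ∫ u in 0..T, w u * f (t - u) ^ p := by
          simp only [mul_add]
          rw [intervalIntegral.integral_add (Continuous.intervalIntegrable (by fun_prop) _ _)
            (Continuous.intervalIntegrable (by fun_prop (disch := linarith)) _ _)]
          simp only [mul_left_comm _ (1 - 1 / p), mul_left_comm _ (1 / p),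
            intervalIntegral.integral_const_mul, intervalIntegral.integral_mul_const]
          ring
  calc ∫ t in 0..T, f t ^ (p - 1) * h t
      ≤ ∫ t in 0..T, ((1 - 1 / p) * W * f t ^ p + 1 / p * ∫ u in 0..T, w u * f (t - u) ^ p) :=
        integral_mono_on hT (Continuous.intervalIntegrable (by fun_prop (disch := linarith)) _ _)
          (Continuous.intervalIntegrable (by fun_prop (disch := linarith)) _ _) fun t _ => hpt t
    _ = (1 - 1 / p) * W * (∫ t in 0..T, f t ^ p) + 1 / p * (W * ∫ t in 0..T, f t ^ p) := by
        rw [intervalIntegral.integral_add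
          (Continuous.intervalIntegrable (by fun_prop (disch := linarith)) _ _)
          (Continuous.intervalIntegrable (by fun_prop) _ _), intervalIntegral.integral_const_mul,
          intervalIntegral.integral_const_mul,
          integral_integral_mul_comp_sub_of_periodic (f := fun t => f t ^ p)
            (by fun_prop (disch := linarith)) (fun t => by simp only [hper t]) hw]
    _ = W * ∫ t in 0..T, f t ^ p := by field_simp; ring

/-- `M` times the Fejér kernel of order `M`. -/
def fejer (M : ℕ) (u : ℝ) : ℝ := ‖∑ j ∈ Finset.range M, cexp (j * u * I)‖ ^ 2

lemma continuous_fejer (M : ℕ) : Continuous (fejer M) := by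
  unfold fejer; fun_prop

lemma ofReal_fejer (M : ℕ) (u : ℝ) :
    (fejer M u : ℂ) =
      ∑ j ∈ Finset.range M, ∑ k ∈ Finset.range M, cexp (((j : ℤ) - k : ℤ) * u * I) := by
  rw [fejer, ofReal_pow, ← Complex.mul_conj', map_sum, Finset.sum_mul_sum]
  refine Finset.sum_congr rfl fun j _ => Finset.sum_congr rfl fun k _ => ?_
  rw [← Complex.exp_conj, ← Complex.exp_add]
  simp only [map_mul, Complex.conj_ofReal, Complex.conj_I, map_natCast]
  push_cast
  ring_nf

lemma integral_exp_int_mul_I (l : ℤ) :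
    ∫ u in (0 : ℝ)..2 * π, cexp (l * u * I) = if l = 0 then ((2 * π : ℝ) : ℂ) else 0 := by
  split_ifs with hl
  · simp [hl]
  have hc : (l : ℂ) * I ≠ 0 := mul_ne_zero (Int.cast_ne_zero.2 hl) I_ne_zero
  simp_rw [mul_right_comm _ _ I]
  rw [integral_exp_mul_complex hc, ofReal_zero, mul_zero, Complex.exp_zero,
    show (l : ℂ) * I * ↑(2 * π) = l * (2 * π * I) by push_cast; ring,
    Complex.exp_int_mul_two_pi_mul_I, sub_self, zero_div]

lemma integral_exp_mul_fejer (M r : ℕ) :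
    ∫ u in (0 : ℝ)..2 * π, cexp (-(r * u * I)) * fejer M u =
      ((2 * π * (M - r : ℕ) : ℝ) : ℂ) := by
  have hexp : ∀ u : ℝ, cexp (-(r * u * I)) * fejer M u = ∑ j ∈ Finset.range M,
      ∑ k ∈ Finset.range M, cexp (((j : ℤ) - k - r : ℤ) * u * I) := fun u => by
    rw [ofReal_fejer, Finset.mul_sum]
    refine Finset.sum_congr rfl fun j _ => ?_
    rw [Finset.mul_sum]
    refine Finset.sum_congr rfl fun k _ => ?_
    rw [← Complex.exp_add]
    push_cast
    ring_nf
  calc ∫ u in (0 : ℝ)..2 * π, cexp (-(r * u * I)) * fejer M u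
      = ∑ j ∈ Finset.range M, ∑ k ∈ Finset.range M,
          ∫ u in (0 : ℝ)..2 * π, cexp (((j : ℤ) - k - r : ℤ) * u * I) := by
        simp_rw [hexp]
        rw [intervalIntegral.integral_finsetSum fun j _ =>
          Continuous.intervalIntegrable (by fun_prop) _ _]
        exact Finset.sum_congr rfl fun j _ => intervalIntegral.integral_finsetSum fun k _ =>
          Continuous.intervalIntegrable (by fun_prop) _ _
    _ = ∑ k ∈ Finset.range M, ∑ j ∈ Finset.range M,
          if k + r = j then ((2 * π : ℝ) : ℂ) else 0 := by
        rw [Finset.sum_comm]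
        refine Finset.sum_congr rfl fun k _ => Finset.sum_congr rfl fun j _ => ?_
        rw [integral_exp_int_mul_I]
        exact if_congr (by omega) rfl rfl
    _ = _ := by
        simp only [Finset.sum_ite_eq, Finset.mem_range]
        rw [Finset.sum_ite, Finset.sum_const, Finset.sum_const_zero, add_zero,
          show (Finset.range M).filter (fun k => k + r < M) = Finset.range (M - r) by
            ext; simp only [Finset.mem_filter, Finset.mem_range]; omega]
        simp [mul_comm]

lemma integral_fejer (M : ℕ) : ∫ u in (0 : ℝ)..2 * π, fejer M u = 2 * π * M := by
  have h := integral_exp_mul_fejer M 0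
  simp only [Nat.cast_zero, zero_mul, neg_zero, Complex.exp_zero, one_mul, Nat.sub_zero,
    intervalIntegral.integral_ofReal] at h
  exact_mod_cast h

section TrigPoly

variable {ι : Type*} (s : Finset ι) (a : ι → ℂ) (m : ι → ℕ)

def trigPoly (t : ℝ) : ℂ := ∑ n ∈ s, a n * cexp (-(m n * t * I))

lemma continuous_trigPoly : Continuous (trigPoly s a m) := by
  unfold trigPoly; fun_prop

lemma trigPoly_periodic : Periodic (trigPoly s a m) (2 * π) := fun t => by
  refine Finset.sum_congr rfl fun n _ => ?_
  rw [show -((m n : ℂ) * ↑(t + 2 * π) * I) = -(m n * t * I) + (-(m n : ℤ) : ℤ) * (2 * π * I) by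
      push_cast; ring,
    Complex.exp_add, Complex.exp_int_mul_two_pi_mul_I, mul_one]

lemma hasDerivAt_trigPoly (t : ℝ) :
    HasDerivAt (trigPoly s a m) (trigPoly s (fun n => -(m n * I) * a n) m t) t := by
  have h : ∀ n, HasDerivAt (fun z : ℂ => cexp (-(m n * z * I)))
      (cexp (-(m n * t * I)) * -(m n * I)) t := fun n => by
    simpa using (((hasDerivAt_id (t : ℂ)).const_mul (m n : ℂ)).mul_const I).neg.cexp
  refine (HasDerivAt.fun_sum fun n _ => ((h n).comp_ofReal).const_mul (a n)).congr_deriv ?_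
  exact Finset.sum_congr rfl fun n _ => by ring

lemma deriv_trigPoly : deriv (trigPoly s a m) = trigPoly s (fun n => -(m n * I) * a n) m :=
  funext fun t => (hasDerivAt_trigPoly s a m t).deriv

lemma two_pi_mul_deriv_trigPoly {M : ℕ} (hm : ∀ n ∈ s, m n ≤ M) (t : ℝ) :
    2 * π * deriv (trigPoly s a m) t =
      -I * ∫ u in (0 : ℝ)..2 * π, trigPoly s a m (t - u) * cexp (-(M * u * I)) * fejer M u := by
  have hterm : ∀ n ∈ s, ∫ u in (0 : ℝ)..2 * π,
      a n * cexp (-(m n * ↑(t - u) * I)) * cexp (-(M * u * I)) * fejer M u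
        = a n * cexp (-(m n * t * I)) * (2 * π * m n) := by
    intro n hn
    -- the coefficient of `fejer M` at frequency `-(M - m n)` is `m n`
    have hsplit : ∀ u : ℝ,
        a n * cexp (-(m n * ↑(t - u) * I)) * cexp (-(M * u * I)) * fejer M u
          = a n * cexp (-(m n * t * I)) * (cexp (-((M - m n : ℕ) * u * I)) * fejer M u) := by
      intro u
      rw [Nat.cast_sub (hm n hn), mul_assoc (a n * _), mul_assoc (a n), mul_assoc (a n),
        ← mul_assoc (cexp _), ← Complex.exp_add, ← mul_assoc (cexp _), ← Complex.exp_add]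
      push_cast
      ring_nf
    simp_rw [hsplit]
    rw [intervalIntegral.integral_const_mul, integral_exp_mul_fejer, Nat.sub_sub_self (hm n hn)]
    push_cast
    ring
  simp_rw [deriv_trigPoly, trigPoly, Finset.sum_mul]
  rw [intervalIntegral.integral_finsetSum fun n _ => Continuous.intervalIntegrable
    (by have := continuous_fejer M; fun_prop) _ _, Finset.sum_congr rfl hterm, Finset.mul_sum,
    Finset.mul_sum]
  exact Finset.sum_congr rfl fun n _ => by ring

lemma norm_deriv_trigPoly_le {M : ℕ} (hm : ∀ n ∈ s, m n ≤ M) (t : ℝ) :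
    ‖deriv (trigPoly s a m) t‖ ≤
      ∫ u in (0 : ℝ)..2 * π, fejer M u / (2 * π) * ‖trigPoly s a m (t - u)‖ := by
  have h := congrArg norm (two_pi_mul_deriv_trigPoly s a m hm t)
  simp only [norm_mul, norm_neg, Complex.norm_I, one_mul, Complex.norm_ofNat, Complex.norm_real,
    Real.norm_of_nonneg pi_pos.le] at h
  simp_rw [div_mul_eq_mul_div]
  rw [intervalIntegral.integral_div, le_div_iff₀' two_pi_pos, h]
  refine (intervalIntegral.norm_integral_le_integral_norm two_pi_pos.le).trans_eq
    (intervalIntegral.integral_congr fun u _ => ?_)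
  simp [Complex.norm_exp, fejer, mul_comm]

lemma integral_norm_rpow_mul_norm_deriv_trigPoly_le {M : ℕ} {p : ℝ} (hp : 1 ≤ p)
    (hm : ∀ n ∈ s, m n ≤ M) :
    ∫ t in (0 : ℝ)..2 * π, ‖trigPoly s a m t‖ ^ (p - 1) * ‖deriv (trigPoly s a m) t‖
      ≤ M * ∫ t in (0 : ℝ)..2 * π, ‖trigPoly s a m t‖ ^ p := by
  have h := integral_rpow_sub_one_mul_le_of_le_conv two_pi_pos.le hp
    (continuous_trigPoly s a m).norm (fun _ => norm_nonneg _)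
    (fun t => by simp only [trigPoly_periodic s a m t])
    (by rw [deriv_trigPoly]; exact (continuous_trigPoly _ _ _).norm)
    ((continuous_fejer M).div_const _) (fun u => by unfold fejer; positivity)
    (norm_deriv_trigPoly_le s a m hm)
  rwa [intervalIntegral.integral_div, integral_fejer,
    mul_div_cancel_left₀ _ two_pi_pos.ne'] at h

lemma norm_trigPoly_rpow_le {M : ℕ} {p t₀ : ℝ} (hp : 1 < p) (hm : ∀ n ∈ s, m n ≤ M)
    (ht₀ : t₀ ∈ Set.Icc 0 (2 * π)) :
    ‖trigPoly s a m t₀‖ ^ p ≤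
      (1 / (2 * π) + p * M) * ∫ t in (0 : ℝ)..2 * π, ‖trigPoly s a m t‖ ^ p := by
  have hg : Differentiable ℝ (trigPoly s a m) := fun t =>
    (hasDerivAt_trigPoly s a m t).differentiableAt
  calc ‖trigPoly s a m t₀‖ ^ p
      ≤ (∫ t in (0 : ℝ)..2 * π, ‖trigPoly s a m t‖ ^ p) / (2 * π) +
          p * ∫ t in (0 : ℝ)..2 * π,
            ‖trigPoly s a m t‖ ^ (p - 1) * ‖deriv (trigPoly s a m) t‖ :=
        norm_rpow_le_average_add_integral two_pi_pos ht₀ hp hg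
          (by rw [deriv_trigPoly]; exact continuous_trigPoly _ _ _)
    _ ≤ (∫ t in (0 : ℝ)..2 * π, ‖trigPoly s a m t‖ ^ p) / (2 * π) +
          p * (M * ∫ t in (0 : ℝ)..2 * π, ‖trigPoly s a m t‖ ^ p) := by
        gcongr
        exact integral_norm_rpow_mul_norm_deriv_trigPoly_le s a m hp.le hm
    _ = _ := by ring

lemma iSup_norm_trigPoly_rpow_le {M : ℕ} {p : ℝ} (hp : 1 < p) (hm : ∀ n ∈ s, m n ≤ M) :
    (⨆ t : Icc (0 : ℝ) 1, ‖trigPoly s a m t‖) ^ p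
      ≤ (1 / (2 * π) + p * M) * ∫ t in Icc 0 (2 * π), ‖trigPoly s a m t‖ ^ p := by
  have hp0 : 0 < p := by linarith
  set K := (1 / (2 * π) + p * M) * ∫ t in Icc 0 (2 * π), ‖trigPoly s a m t‖ ^ p with hK_def
  have hK : ∀ t : Icc (0 : ℝ) 1, ‖trigPoly s a m t‖ ^ p ≤ K := fun t => by
    rw [hK_def, integral_Icc_eq_integral_Ioc, ← intervalIntegral.integral_of_le two_pi_pos.le]
    exact norm_trigPoly_rpow_le s a m hp hm ⟨t.2.1, t.2.2.trans (by linarith [pi_gt_three])⟩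
  have hK0 : 0 ≤ K := (rpow_nonneg (norm_nonneg _) _).trans (hK ⟨0, left_mem_Icc.2 zero_le_one⟩)
  have hsup : (⨆ t : Icc (0 : ℝ) 1, ‖trigPoly s a m t‖) ≤ K ^ p⁻¹ := by
    have : Nonempty (Icc (0 : ℝ) 1) := (nonempty_Icc.2 zero_le_one).to_subtype
    refine ciSup_le fun t => ?_
    rw [← rpow_rpow_inv (norm_nonneg _) hp0.ne']
    exact rpow_le_rpow (rpow_nonneg (norm_nonneg _) _) (hK t) (inv_nonneg.2 hp0.le)
  calc (⨆ t : Icc (0 : ℝ) 1, ‖trigPoly s a m t‖) ^ p ≤ (K ^ p⁻¹) ^ p :=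
        rpow_le_rpow (Real.iSup_nonneg fun _ => norm_nonneg _) hsup hp0.le
    _ = K := rpow_inv_rpow hK0 hp0.ne'

end TrigPoly

lemma torusLp_iSup_le {d : ℕ} {F : (Fin d → ℝ) → ℝ → ℂ} {p K : ℝ} (hp : 0 < p) (hK : 0 ≤ K)
    (hF : Continuous (uncurry F))
    (hsup : ∀ x, (⨆ t : Icc (0 : ℝ) 1, ‖F x t‖) ^ p ≤ K * ∫ t in Icc 0 (2 * π), ‖F x t‖ ^ p) :
    torusLp p (fun x => ⨆ t : Icc (0 : ℝ) 1, ‖F x t‖) ≤ K ^ (1 / p) * stLp p F := by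
  have hint : IntegrableOn (fun x => ∫ t in Icc 0 (2 * π), ‖F x t‖ ^ p) (torusBox d) :=
    (continuous_parametric_integral_of_continuous (by fun_prop (disch := linarith))
      isCompact_Icc).continuousOn.integrableOn_compact (isCompact_univ_pi fun _ => isCompact_Icc)
  have hsup0 : ∀ x, 0 ≤ ⨆ t : Icc (0 : ℝ) 1, ‖F x t‖ := fun x =>
    Real.iSup_nonneg fun _ => norm_nonneg _
  rw [torusLp, stLp, ← mul_rpow hK (integral_nonneg fun x => integral_nonneg fun t =>
    rpow_nonneg (norm_nonneg _) _), ← MeasureTheory.integral_const_mul]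
  refine rpow_le_rpow (integral_nonneg fun x => rpow_nonneg (abs_nonneg _) _)
    (integral_mono_of_nonneg (.of_forall fun x => rpow_nonneg (abs_nonneg _) _) (hint.const_mul K)
      (.of_forall fun x => ?_)) (by positivity)
  simpa only [abs_of_nonneg (hsup0 x)] using hsup x

def sqNorm {d : ℕ} (n : Fin d → ℤ) : ℕ := ∑ i, (n i).natAbs ^ 2

lemma cast_sqNorm {d : ℕ} (n : Fin d → ℤ) : (sqNorm n : ℝ) = ∑ i, (n i : ℝ) ^ 2 := by
  simp [sqNorm, Nat.cast_natAbs, sq_abs]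

lemma sqNorm_le_four_pow_of_inorm_le {d : ℕ} {n : Fin d → ℤ} {k : ℕ} (h : inorm n ≤ 2 ^ k) :
    sqNorm n ≤ 4 ^ k := by
  have h2 : (sqNorm n : ℝ) ≤ (2 ^ k) ^ 2 := by
    rw [cast_sqNorm, ← Real.sq_sqrt (Finset.sum_nonneg fun i _ => sq_nonneg (n i : ℝ))]
    exact pow_le_pow_left₀ (Real.sqrt_nonneg _) h 2
  rw [← pow_mul, pow_mul'] at h2
  exact_mod_cast h2

lemma finite_setOf_sqNorm_le (d M : ℕ) : {n : Fin d → ℤ | sqNorm n ≤ M}.Finite := by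
  refine (Set.finite_Icc (fun _ => -(M : ℤ)) fun _ => (M : ℤ)).subset fun n hn => ?_
  have hi : ∀ i, (n i).natAbs ≤ M := fun i =>
    (Nat.le_self_pow two_ne_zero _).trans ((Finset.single_le_sum (f := fun i => (n i).natAbs ^ 2)
      (fun _ _ => Nat.zero_le _) (Finset.mem_univ i)).trans hn)
  have hi' : ∀ i, |n i| ≤ M := fun i => by rw [Int.abs_eq_natAbs]; exact_mod_cast hi i
  exact ⟨fun i => (abs_le.1 (hi' i)).1, fun i => (abs_le.1 (hi' i)).2⟩

lemma freeSol_eq_trigPoly {d : ℕ} {c : (Fin d → ℤ) → ℂ} {s : Finset (Fin d → ℤ)}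
    (hs : ∀ n, c n ≠ 0 → n ∈ s) (x : Fin d → ℝ) (t : ℝ) :
    freeSol c x t = trigPoly s (fun n => c n * cexp (I * ∑ i, (n i : ℝ) * x i)) sqNorm t := by
  rw [freeSol, tsum_eq_sum fun n hn => by rw [not_not.1 (mt (hs n) hn), zero_mul]]
  refine Finset.sum_congr rfl fun n _ => ?_
  rw [show (sqNorm n : ℂ) = ((∑ i, (n i : ℝ) ^ 2 : ℝ) : ℂ) by rw [← cast_sqNorm]; norm_cast,
    mul_assoc, ← Complex.exp_add]
  push_cast
  ring_nf

lemma torusLp_iSup_norm_freeSol_le {d M : ℕ} {c : (Fin d → ℤ) → ℂ} {p : ℝ} (hp : 1 < p)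
    (hc : ∀ n, c n ≠ 0 → sqNorm n ≤ M) :
    torusLp p (fun x => ⨆ t : Icc (0 : ℝ) 1, ‖freeSol c x t‖)
      ≤ (1 / (2 * π) + p * M) ^ (1 / p) * stLp p (freeSol c) := by
  set s := (finite_setOf_sqNorm_le d M).toFinset
  have hsol : freeSol c = fun x t =>
      trigPoly s (fun n => c n * cexp (I * ∑ i, (n i : ℝ) * x i)) sqNorm t :=
    funext₂ (freeSol_eq_trigPoly fun n hn => (Set.Finite.mem_toFinset _).2 (hc n hn))
  refine torusLp_iSup_le (by linarith) (by positivity) ?_ fun x => ?_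
  · rw [hsol]; unfold trigPoly; fun_prop
  · rw [hsol]
    exact iSup_norm_trigPoly_rpow_le _ _ _ hp fun n hn => by simpa [s] using hn

lemma rpow_one_div_le_mul_rpow {p M : ℝ} (hp : 1 ≤ p) (hM : 1 ≤ M) :
    (1 / (2 * π) + p * M) ^ (1 / p) ≤ (1 + p) * M ^ (1 / p) := by
  have hp0 : 0 < p := by linarith
  have hpi : 1 / (2 * π) ≤ 1 := by
    rw [div_le_one two_pi_pos]; linarith [pi_gt_three]
  calc (1 / (2 * π) + p * M) ^ (1 / p) ≤ ((1 + p) * M) ^ (1 / p) :=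
        rpow_le_rpow (by positivity) (by nlinarith) (by positivity)
    _ = (1 + p) ^ (1 / p) * M ^ (1 / p) := mul_rpow (by linarith) (by linarith)
    _ ≤ (1 + p) * M ^ (1 / p) := by
        gcongr
        conv_rhs => rw [← rpow_one (1 + p)]
        exact rpow_le_rpow_of_exponent_le (by linarith) ((div_le_one hp0).2 hp)

theorem torus_localized_maximal_estimate_general (d : ℕ) (hd : 1 ≤ d)
    (ε : ℝ) (C₁ : ℝ) (hC₁ : 0 < C₁) :
    ∃ C > (0:ℝ), ∀ k : ℕ, ∀ c : (Fin d → ℤ) → ℂ,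
      (∀ n, c n ≠ 0 → ((2:ℝ)^k)/2 < inorm n ∧ inorm n ≤ (2:ℝ)^k) →
      (stLp (2*((d:ℝ)+2)/d) (freeSol c)
          ≤ C₁ * ((2:ℝ)^k) ^ ((d:ℝ)/2 - ((d:ℝ)+2)/(2*((d:ℝ)+2)/d) + ε) * HsNorm 0 c) →
      torusLp (2*((d:ℝ)+2)/d) (fun x => ⨆ t : Set.Icc (0:ℝ) 1, ‖freeSol c x t.1‖)
        ≤ C * ((2:ℝ)^k) ^ ((d:ℝ)/(d+2) + ε) * HsNorm 0 c := by
  set p : ℝ := 2 * ((d : ℝ) + 2) / d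
  have hd0 : (0 : ℝ) < d := by exact_mod_cast hd
  have hp : 1 < p := by rw [lt_div_iff₀ hd0]; linarith
  have hstrichartz_exp : (d : ℝ) / 2 - ((d : ℝ) + 2) / p = 0 := by
    simp only [p]; field_simp; ring
  have hmax_exp : 2 * (1 / p) = d / (d + 2) := by simp only [p]; field_simp
  refine ⟨(1 + p) * C₁, by positivity, fun k c hsupp hstri => ?_⟩
  rw [hstrichartz_exp, zero_add] at hstri
  have hN : (((4 ^ k : ℕ) : ℝ)) = ((2 : ℝ) ^ k) ^ (2 : ℝ) := by
    rw [rpow_two, ← pow_mul, pow_mul']; norm_num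
  have hstLp : 0 ≤ stLp p (freeSol c) := by rw [stLp]; positivity
  calc torusLp p (fun x => ⨆ t : Icc (0 : ℝ) 1, ‖freeSol c x t.1‖)
      ≤ (1 / (2 * π) + p * ((4 ^ k : ℕ) : ℝ)) ^ (1 / p) * stLp p (freeSol c) :=
        torusLp_iSup_norm_freeSol_le hp fun n hn => sqNorm_le_four_pow_of_inorm_le (hsupp n hn).2
    _ ≤ ((1 + p) * ((2 : ℝ) ^ k) ^ ((d : ℝ) / (d + 2))) *
          (C₁ * ((2 : ℝ) ^ k) ^ ε * HsNorm 0 c) := by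
        gcongr
        rw [← hmax_exp, rpow_mul (by positivity), ← hN]
        exact rpow_one_div_le_mul_rpow hp.le (by exact_mod_cast Nat.one_le_pow _ _ (by norm_num))
    _ = (1 + p) * C₁ * ((2 : ℝ) ^ k) ^ ((d : ℝ) / (d + 2) + ε) * HsNorm 0 c := by
        rw [rpow_add (by positivity)]; ring

/-- Frequency-localized maximal estimate on `𝕋^d`: for `f` with Fourier support in the
annulus `|n| ∼ N`, assuming the Strichartz estimate at `p = 2(d+2)/d` one has
`‖sup_{0≤t≤1}|e^{itΔ}f|‖_{L^{2(d+2)/d}(𝕋^d)} ≲ N^{d/(d+2)+ε} ‖f‖_{L²}`. -/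
theorem torus_localized_maximal_estimate (d : ℕ) (hd : 1 ≤ d)
    (ε : ℝ) (hε : 0 < ε) (C₁ : ℝ) (hC₁ : 0 < C₁) :
    ∃ C > (0:ℝ), ∀ k : ℕ, ∀ c : (Fin d → ℤ) → ℂ,
      (∀ n, c n ≠ 0 → ((2:ℝ)^k)/2 < inorm n ∧ inorm n ≤ (2:ℝ)^k) →
      (stLp (2*((d:ℝ)+2)/d) (freeSol c)
          ≤ C₁ * ((2:ℝ)^k) ^ ((d:ℝ)/2 - ((d:ℝ)+2)/(2*((d:ℝ)+2)/d) + ε) * HsNorm 0 c) →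
      torusLp (2*((d:ℝ)+2)/d) (fun x => ⨆ t : Set.Icc (0:ℝ) 1, ‖freeSol c x t.1‖)
        ≤ C * ((2:ℝ)^k) ^ ((d:ℝ)/(d+2) + ε) * HsNorm 0 c :=
  torus_localized_maximal_estimate_general d hd ε C₁ hC₁
end
end

section
/- Fix $\mu \in \mathbb{Z}$ and dyadic scales $N_1, N_2, N_3$ on $\mathbb{Z}^2$. Consider the set $S = \{(n_1, n_2, n_3) \in (\mathbb{Z}^2)^3 : |n_j| \sim N_j,\ n_2 \neq n_1,\ n_2 \neq n_3,\ n_1 \neq n_3,\ 2(n_1 - n_2)\cdot(n_3 - n_2) = \mu\}$. Then $\# S \lesssim N_1 N_2^2 N_3^2$. -/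
/-!
Fix `n₂ ≠ n₃` in boxes of side `≈ N₂` and `≈ N₃`. The resonance relation
`2 (n₁ - n₂) · (n₃ - n₂) = μ` is then a nontrivial linear equation in `n₁`, so `n₁` lies on a
lattice line, and a line meets a box of side `≈ N₁` in at most `≈ N₁` lattice points (one
coordinate determines the other). Summing over the `≲ N₂² N₃²` pairs gives the bound.
-/

noncomputable section

/-- Euclidean norm of a lattice point in `ℤ²`. -/
def znorm (n : ℤ × ℤ) : ℝ := Real.sqrt ((n.1:ℝ)^2 + (n.2:ℝ)^2)

/-- Dot product on `ℤ²`. -/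
def zdot (a b : ℤ × ℤ) : ℤ := a.1 * b.1 + a.2 * b.2

open Finset

lemma abs_fst_le_znorm (n : ℤ × ℤ) : |(n.1 : ℝ)| ≤ znorm n := by
  rw [znorm, ← Real.sqrt_sq_eq_abs]
  exact Real.sqrt_le_sqrt (by nlinarith [sq_nonneg (n.2 : ℝ)])

lemma abs_snd_le_znorm (n : ℤ × ℤ) : |(n.2 : ℝ)| ≤ znorm n := by
  rw [znorm, ← Real.sqrt_sq_eq_abs]
  exact Real.sqrt_le_sqrt (by nlinarith [sq_nonneg (n.1 : ℝ)])

def latticeBox (M : ℕ) : Finset (ℤ × ℤ) := Icc (-(M : ℤ)) M ×ˢ Icc (-(M : ℤ)) M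

lemma card_Icc_neg_self (M : ℕ) : #(Icc (-(M : ℤ)) M) = 2 * M + 1 := by
  rw [Int.card_Icc]
  omega

lemma card_latticeBox (M : ℕ) : #(latticeBox M) = (2 * M + 1) ^ 2 := by
  rw [latticeBox, card_product, card_Icc_neg_self, sq]

lemma mem_latticeBox_of_znorm_le {n : ℤ × ℤ} {M : ℕ} (h : znorm n ≤ M) : n ∈ latticeBox M := by
  have h₁ : |n.1| ≤ M := by exact_mod_cast (abs_fst_le_znorm n).trans h
  have h₂ : |n.2| ≤ M := by exact_mod_cast (abs_snd_le_znorm n).trans h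
  simp only [latticeBox, mem_product, mem_Icc]
  exact ⟨abs_le.1 h₁, abs_le.1 h₂⟩

lemma card_filter_linear_eq_le {R : Type*} [CommRing R] [IsDomain R] [DecidableEq R]
    (s t : Finset R) {a : R × R} (ha : a ≠ 0) (c : R) :
    #{n ∈ s ×ˢ t | a.1 * n.1 + a.2 * n.2 = c} ≤ max #s #t := by
  by_cases ha₁ : a.1 = 0
  · have ha₂ : a.2 ≠ 0 := fun ha₂ => ha (Prod.ext ha₁ ha₂)
    refine le_max_of_le_left (card_le_card_of_injOn Prod.fst ?_ ?_)
    · intro n hn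
      exact (mem_product.1 (mem_filter.1 hn).1).1
    · intro x hx y hy hxy
      simp only [mem_coe, mem_filter, ha₁, zero_mul, zero_add] at hx hy
      exact Prod.ext hxy (mul_left_cancel₀ ha₂ (hx.2.trans hy.2.symm))
  · refine le_max_of_le_right (card_le_card_of_injOn Prod.snd ?_ ?_)
    · intro n hn
      exact (mem_product.1 (mem_filter.1 hn).1).2
    · intro x hx y hy hxy
      simp only [mem_coe, mem_filter] at hx hy
      have h : a.1 * x.1 = a.1 * y.1 := by
        have := hx.2.trans hy.2.symm
        rw [hxy] at this
        exact add_right_cancel this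
      exact Prod.ext (mul_left_cancel₀ ha₁ h) hxy

def resonantBoxTriples (μ : ℤ) (M₁ M₂ M₃ : ℕ) : Finset ((ℤ × ℤ) × (ℤ × ℤ) × (ℤ × ℤ)) :=
  {x ∈ latticeBox M₁ ×ˢ latticeBox M₂ ×ˢ latticeBox M₃ |
    x.2.1 ≠ x.2.2 ∧ 2 * zdot (x.1 - x.2.1) (x.2.2 - x.2.1) = μ}

lemma card_resonantBoxTriples_fiber_le (μ : ℤ) (M₁ M₂ M₃ : ℕ) (p : (ℤ × ℤ) × (ℤ × ℤ)) :
    #{x ∈ resonantBoxTriples μ M₁ M₂ M₃ | x.2 = p} ≤ 2 * M₁ + 1 := by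
  obtain ⟨n₂, n₃⟩ := p
  by_cases hne : n₂ = n₃
  · refine (card_eq_zero.2 (filter_eq_empty_iff.2 fun x hx hp => ?_)).trans_le (Nat.zero_le _)
    exact (mem_filter.1 hx).2.1 (by simp [hp, hne])
  set a : ℤ × ℤ := (2 * (n₃.1 - n₂.1), 2 * (n₃.2 - n₂.2))
  have ha : a ≠ 0 := by
    intro h
    simp only [a, Prod.ext_iff, Prod.fst_zero, Prod.snd_zero] at h
    exact hne (Prod.ext (by omega) (by omega))
  calc #{x ∈ resonantBoxTriples μ M₁ M₂ M₃ | x.2 = (n₂, n₃)}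
      ≤ #{n ∈ latticeBox M₁ | a.1 * n.1 + a.2 * n.2 = μ + 2 * zdot n₂ (n₃ - n₂)} := by
        refine card_le_card_of_injOn Prod.fst ?_ ?_
        · rintro ⟨n₁, m₂, m₃⟩ hx
          simp only [resonantBoxTriples, mem_coe, mem_filter, mem_product, Prod.mk.injEq] at hx ⊢
          obtain ⟨⟨⟨hn₁, -⟩, -, hres⟩, rfl, rfl⟩ := hx
          refine ⟨hn₁, ?_⟩
          simp only [a, zdot, Prod.fst_sub, Prod.snd_sub] at hres ⊢
          linear_combination hres
        · intro x hx y hy hxy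
          simp only [mem_coe, mem_filter] at hx hy
          exact Prod.ext hxy (hx.2.trans hy.2.symm)
    _ ≤ max #(Icc (-(M₁ : ℤ)) M₁) #(Icc (-(M₁ : ℤ)) M₁) := card_filter_linear_eq_le _ _ ha _
    _ = 2 * M₁ + 1 := by rw [max_self, card_Icc_neg_self]

lemma card_resonantBoxTriples_le (μ : ℤ) (M₁ M₂ M₃ : ℕ) :
    #(resonantBoxTriples μ M₁ M₂ M₃) ≤ (2 * M₁ + 1) * ((2 * M₂ + 1) ^ 2 * (2 * M₃ + 1) ^ 2) := by
  rw [← card_latticeBox, ← card_latticeBox, ← card_product]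
  refine card_le_mul_card_image_of_maps_to (f := Prod.snd) ?_ _
    (fun p _ => card_resonantBoxTriples_fiber_le μ M₁ M₂ M₃ p)
  intro x hx
  exact (mem_product.1 (mem_filter.1 hx).1).2

lemma two_mul_two_mul_two_pow_add_one_le (k : ℕ) : 2 * (2 * 2 ^ k) + 1 ≤ 5 * 2 ^ k := by
  have := Nat.one_le_two_pow (n := k)
  omega

lemma card_resonantBoxTriples_dyadic_le (μ : ℤ) (k₁ k₂ k₃ : ℕ) :
    #(resonantBoxTriples μ (2 * 2 ^ k₁) (2 * 2 ^ k₂) (2 * 2 ^ k₃)) ≤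
      3125 * 2 ^ k₁ * (2 ^ k₂) ^ 2 * (2 ^ k₃) ^ 2 :=
  calc _ ≤ (2 * (2 * 2 ^ k₁) + 1) * ((2 * (2 * 2 ^ k₂) + 1) ^ 2 * (2 * (2 * 2 ^ k₃) + 1) ^ 2) :=
        card_resonantBoxTriples_le _ _ _ _
    _ ≤ (5 * 2 ^ k₁) * ((5 * 2 ^ k₂) ^ 2 * (5 * 2 ^ k₃) ^ 2) := by
        gcongr <;> exact two_mul_two_mul_two_pow_add_one_le _
    _ = 3125 * 2 ^ k₁ * (2 ^ k₂) ^ 2 * (2 ^ k₃) ^ 2 := by ring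

/-- Lattice-point count for the cubic resonance relation on `𝕋²`: the set of triples
`(n₁,n₂,n₃)` with `|n_j| ∼ N_j`, pairwise constraints, and `2(n₁-n₂)·(n₃-n₂) = μ` has
cardinality `≲ N₁ N₂² N₃²`. -/
theorem resonant_triples_count :
    ∃ C > (0:ℝ), ∀ μ : ℤ, ∀ k₁ k₂ k₃ : ℕ,
      letI S : Set ((ℤ × ℤ) × (ℤ × ℤ) × (ℤ × ℤ)) :=
        {x | ((2:ℝ)^k₁ ≤ znorm x.1 ∧ znorm x.1 < 2*(2:ℝ)^k₁)
          ∧ ((2:ℝ)^k₂ ≤ znorm x.2.1 ∧ znorm x.2.1 < 2*(2:ℝ)^k₂)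
          ∧ ((2:ℝ)^k₃ ≤ znorm x.2.2 ∧ znorm x.2.2 < 2*(2:ℝ)^k₃)
          ∧ x.2.1 ≠ x.1 ∧ x.2.1 ≠ x.2.2 ∧ x.1 ≠ x.2.2
          ∧ 2 * zdot (x.1 - x.2.1) (x.2.2 - x.2.1) = μ}
      S.Finite ∧ (S.ncard : ℝ) ≤ C * (2:ℝ)^k₁ * ((2:ℝ)^k₂)^2 * ((2:ℝ)^k₃)^2 := by
  refine ⟨3125, by norm_num, fun μ k₁ k₂ k₃ => ?_⟩
  set T := resonantBoxTriples μ (2 * 2 ^ k₁) (2 * 2 ^ k₂) (2 * 2 ^ k₃)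
  have hbox {k : ℕ} {n : ℤ × ℤ} (h : znorm n < 2 * (2:ℝ) ^ k) : n ∈ latticeBox (2 * 2 ^ k) :=
    mem_latticeBox_of_znorm_le (by push_cast; exact h.le)
  suffices hST : ∀ S : Set ((ℤ × ℤ) × (ℤ × ℤ) × (ℤ × ℤ)), S ⊆ T →
      S.Finite ∧ (S.ncard : ℝ) ≤ 3125 * (2:ℝ) ^ k₁ * ((2:ℝ) ^ k₂) ^ 2 * ((2:ℝ) ^ k₃) ^ 2 by
    refine hST _ ?_
    rintro x ⟨⟨-, h₁⟩, ⟨-, h₂⟩, ⟨-, h₃⟩, -, h₂₃, -, hres⟩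
    simp only [T, resonantBoxTriples, mem_coe, mem_filter, mem_product]
    exact ⟨⟨hbox h₁, hbox h₂, hbox h₃⟩, h₂₃, hres⟩
  intro S hST
  refine ⟨T.finite_toSet.subset hST, ?_⟩
  calc (S.ncard : ℝ) ≤ #T := by
        exact_mod_cast (Set.ncard_le_ncard hST T.finite_toSet).trans_eq (Set.ncard_coe_finset T)
    _ ≤ 3125 * (2:ℝ) ^ k₁ * ((2:ℝ) ^ k₂) ^ 2 * ((2:ℝ) ^ k₃) ^ 2 := by
        exact_mod_cast card_resonantBoxTriples_dyadic_le μ k₁ k₂ k₃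
end
end
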